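/- Let Λ be a row-finite k-graph with no sources such that Λ⁰ is a maximal tail. If p, q ∈ ℕ^k and n ∈ ℤ^k satisfy p - n, q - n ∈ ℕ^k and (p - n, q - n) ∈ Σ_Λ, then (p, q) ∈ Σ_Λ. -/

import Mathlib

/-- A `P`-graph structure on a set `V` of vertices (objects) and a set `E` of paths
(morphisms): a small category with range `r`, source `s`, identities `vert`,
a (partially meaningful) composition `comp`, together with a degree functor `d : E → P`
satisfying the unique factorisation property. -/
structure PGraphStr (P : Type) [AddCommMonoid P] (V : Type) (E : Type) where
  r : E → V
  s : E → V
  d : E → P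
  vert : V → E
  comp : E → E → E
  r_vert : ∀ v, r (vert v) = v
  s_vert : ∀ v, s (vert v) = v
  d_vert : ∀ v, d (vert v) = 0
  r_comp : ∀ μ ν, s μ = r ν → r (comp μ ν) = r μ
  s_comp : ∀ μ ν, s μ = r ν → s (comp μ ν) = s ν
  d_comp : ∀ μ ν, s μ = r ν → d (comp μ ν) = d μ + d ν
  comp_assoc : ∀ μ ν ξ, s μ = r ν → s ν = r ξ →
    comp (comp μ ν) ξ = comp μ (comp ν ξ)
  vert_comp : ∀ μ, comp (vert (r μ)) μ = μ
  comp_vert : ∀ μ, comp μ (vert (s μ)) = μ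
  factor : ∀ ξ p q, d ξ = p + q →
    ∃! ηζ : E × E, s ηζ.1 = r ηζ.2 ∧ d ηζ.1 = p ∧ d ηζ.2 = q ∧ comp ηζ.1 ηζ.2 = ξ

variable {k : ℕ} {V E : Type}

/-- A `k`-graph (an `ℕ^k`-graph) is row-finite with no sources when
`0 < |vΛ^n| < ∞` for every vertex `v` and degree `n`. -/
def RowFiniteNoSources (Λ : PGraphStr (Fin k → ℕ) V E) : Prop :=
  ∀ (v : V) (n : Fin k → ℕ),
    {e : E | Λ.r e = v ∧ Λ.d e = n}.Finite ∧ {e : E | Λ.r e = v ∧ Λ.d e = n}.Nonempty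

/-- An infinite path in a `k`-graph `Λ`: a degree-preserving functor `Ω_{ℕ^k} → Λ`,
recorded by its segments `x(m,n)` for `m ≤ n`. -/
structure InfPath (Λ : PGraphStr (Fin k → ℕ) V E) where
  seg : ∀ m n : Fin k → ℕ, m ≤ n → E
  d_seg : ∀ m n (h : m ≤ n), Λ.d (seg m n h) = n - m
  src : ∀ m n p (h₁ : m ≤ n) (h₂ : n ≤ p), Λ.s (seg m n h₁) = Λ.r (seg n p h₂)
  seg_self : ∀ m, seg m m le_rfl = Λ.vert (Λ.r (seg m m le_rfl))
  comp_seg : ∀ m n p (h₁ : m ≤ n) (h₂ : n ≤ p),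
    Λ.comp (seg m n h₁) (seg n p h₂) = seg m p (h₁.trans h₂)

/-- The range `x(0)` of an infinite path. -/
def InfPath.range {Λ : PGraphStr (Fin k → ℕ) V E} (x : InfPath Λ) : V :=
  Λ.r (x.seg 0 0 le_rfl)

/-- The shift `σ^p(x)`, with `σ^p(x)(m,n) = x(m+p,n+p)`. -/
def InfPath.shift {Λ : PGraphStr (Fin k → ℕ) V E} (p : Fin k → ℕ) (x : InfPath Λ) :
    InfPath Λ where
  seg m n h := x.seg (m + p) (n + p) (add_le_add h le_rfl)
  d_seg m n h := by
    rw [x.d_seg]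
    funext i
    simp [Nat.add_sub_add_right]
  src m n q h₁ h₂ := x.src _ _ _ _ _
  seg_self m := x.seg_self (m + p)
  comp_seg m n q h₁ h₂ := x.comp_seg _ _ _ _ _

/-- `Extends Λ y μ x` means `y = μx`: `y(0, d(μ)) = μ` and `σ^{d(μ)}(y) = x`. -/
def Extends (Λ : PGraphStr (Fin k → ℕ) V E) (y : InfPath Λ) (μ : E) (x : InfPath Λ) :
    Prop :=
  y.seg 0 (Λ.d μ) zero_le = μ ∧ y.shift (Λ.d μ) = x

/-- The relation `μ ∼ ν`: `s(μ) = s(ν)` and `μx = νx` for every infinite path `x`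
with range `s(μ)`. -/
def CKeq (Λ : PGraphStr (Fin k → ℕ) V E) (μ ν : E) : Prop :=
  Λ.s μ = Λ.s ν ∧ ∀ x y z : InfPath Λ, x.range = Λ.s μ →
    Extends Λ y μ x → Extends Λ z ν x → y = z

/-- The periodicity set `Per(Λ) = {d(μ) - d(ν) : μ ∼ ν} ⊆ ℤ^k`. -/
def PerSet (Λ : PGraphStr (Fin k → ℕ) V E) : Set (Fin k → ℤ) :=
  {g | ∃ μ ν : E, CKeq Λ μ ν ∧ g = fun i => (Λ.d μ i : ℤ) - (Λ.d ν i : ℤ)}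

/-- A maximal tail in a `k`-graph. -/
def IsMaximalTail (Λ : PGraphStr (Fin k → ℕ) V E) (T : Set V) : Prop :=
  T.Nonempty ∧
  (∀ v₁ ∈ T, ∀ v₂ ∈ T, ∃ w ∈ T,
    (∃ e : E, Λ.r e = v₁ ∧ Λ.s e = w) ∧ ∃ e : E, Λ.r e = v₂ ∧ Λ.s e = w) ∧
  (∀ v ∈ T, ∀ i : Fin k,
    ∃ e : E, Λ.r e = v ∧ Λ.d e = Pi.single i 1 ∧ Λ.s e ∈ T) ∧
  (∀ w ∈ T, ∀ (v : V) (e : E), Λ.r e = v → Λ.s e = w → v ∈ T)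

/-- `Σ_v = {(p,q) : σ^p(x) = σ^q(x) for all x ∈ vΛ^∞}`. -/
def SigmaV (Λ : PGraphStr (Fin k → ℕ) V E) (v : V) :
    Set ((Fin k → ℕ) × (Fin k → ℕ)) :=
  {pq | ∀ x : InfPath Λ, x.range = v → x.shift pq.1 = x.shift pq.2}

/-- `Σ_Λ = ⋃_v Σ_v`. -/
def SigmaL (Λ : PGraphStr (Fin k → ℕ) V E) : Set ((Fin k → ℕ) × (Fin k → ℕ)) :=
  ⋃ v : V, SigmaV Λ v

/-- The hereditary set `H_Per`. -/
def HPer (Λ : PGraphStr (Fin k → ℕ) V E) : Set V :=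
  {v | ∀ lam : E, Λ.r lam = v → ∀ m : Fin k → ℕ,
    (fun i => (Λ.d lam i : ℤ) - (m i : ℤ)) ∈ PerSet Λ →
    ∃ μ : E, Λ.r μ = v ∧ Λ.d μ = m ∧ CKeq Λ lam μ}

/-- The coordinatewise inclusion `ℕ^k →+ ℤ^k`. -/
def intCast (k : ℕ) : (Fin k → ℕ) →+ (Fin k → ℤ) where
  toFun n := fun i => (n i : ℤ)
  map_zero' := by funext i; simp
  map_add' a b := by funext i; simp

/-- The composite `ℕ^k → ℤ^k → ℤ^k/H`. -/
def quotHom (k : ℕ) (H : AddSubgroup (Fin k → ℤ)) :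
    (Fin k → ℕ) →+ (Fin k → ℤ) ⧸ H :=
  (QuotientAddGroup.mk' H).comp (intCast k)

/-- The submonoid `P = f(ℕ^k)` of `ℤ^k/H`. -/
def PMon (k : ℕ) (H : AddSubgroup (Fin k → ℤ)) : AddSubmonoid ((Fin k → ℤ) ⧸ H) :=
  AddMonoidHom.mrange (quotHom k H)

theorem mem_PMon (k : ℕ) (H : AddSubgroup (Fin k → ℤ)) (n : Fin k → ℕ) :
    quotHom k H n ∈ PMon k H :=
  ⟨n, rfl⟩


section TranslationAux

variable (Λ : PGraphStr (Fin k → ℕ) V E)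

/-- Split a path `ξ` at degree `m ≤ d ξ`. -/
noncomputable def pgSplit (ξ : E) (m : Fin k → ℕ) (h : m ≤ Λ.d ξ) : E × E :=
  (Λ.factor ξ m (Λ.d ξ - m) (add_tsub_cancel_of_le h).symm).exists.choose

theorem pgSplit_spec (ξ : E) (m : Fin k → ℕ) (h : m ≤ Λ.d ξ) :
    Λ.s (pgSplit Λ ξ m h).1 = Λ.r (pgSplit Λ ξ m h).2 ∧
      Λ.d (pgSplit Λ ξ m h).1 = m ∧ Λ.d (pgSplit Λ ξ m h).2 = Λ.d ξ - m ∧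
      Λ.comp (pgSplit Λ ξ m h).1 (pgSplit Λ ξ m h).2 = ξ :=
  (Λ.factor ξ m (Λ.d ξ - m) (add_tsub_cancel_of_le h).symm).exists.choose_spec

theorem pgSplit_unique {ξ : E} {m : Fin k → ℕ} (h : m ≤ Λ.d ξ) (α β : E)
    (h1 : Λ.s α = Λ.r β) (h2 : Λ.d α = m) (h3 : Λ.comp α β = ξ) :
    pgSplit Λ ξ m h = (α, β) := by
  have hdβ : Λ.d β = Λ.d ξ - m := by
    have hd := Λ.d_comp α β h1
    rw [h3] at hd
    rw [hd, h2, add_tsub_cancel_left]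
  exact (Λ.factor ξ m (Λ.d ξ - m) (add_tsub_cancel_of_le h).symm).unique
    (y₂ := (α, β)) (pgSplit_spec Λ ξ m h) ⟨h1, h2, hdβ, h3⟩

theorem pgSplit_congr {ξ ξ' : E} (e : ξ = ξ') (m : Fin k → ℕ) (h : m ≤ Λ.d ξ)
    (h' : m ≤ Λ.d ξ') : pgSplit Λ ξ m h = pgSplit Λ ξ' m h' := by
  subst e; rfl

theorem pg_eq_vert (e : E) (h : Λ.d e = 0) : e = Λ.vert (Λ.r e) := by
  have hex := Λ.factor e 0 0 (by rw [h, add_zero])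
  have h1 : Λ.s (Λ.vert (Λ.r e)) = Λ.r e ∧ Λ.d (Λ.vert (Λ.r e)) = 0 ∧ Λ.d e = 0 ∧
      Λ.comp (Λ.vert (Λ.r e)) e = e := ⟨Λ.s_vert _, Λ.d_vert _, h, Λ.vert_comp e⟩
  have h2 : Λ.s e = Λ.r (Λ.vert (Λ.s e)) ∧ Λ.d e = 0 ∧ Λ.d (Λ.vert (Λ.s e)) = 0 ∧
      Λ.comp e (Λ.vert (Λ.s e)) = e := ⟨(Λ.r_vert _).symm, h, Λ.d_vert _, Λ.comp_vert e⟩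
  exact (congrArg Prod.fst
    (hex.unique (y₁ := (Λ.vert (Λ.r e), e)) (y₂ := (e, Λ.vert (Λ.s e))) h1 h2)).symm

theorem pgSplit_comp (ξ η : E) (hsr : Λ.s ξ = Λ.r η) (m : Fin k → ℕ)
    (hm : m ≤ Λ.d ξ) (hm' : m ≤ Λ.d (Λ.comp ξ η)) :
    pgSplit Λ (Λ.comp ξ η) m hm' = ((pgSplit Λ ξ m hm).1, Λ.comp (pgSplit Λ ξ m hm).2 η) := by
  obtain ⟨s1, d1, _, c1⟩ := pgSplit_spec Λ ξ m hm
  have hsnd : Λ.s (pgSplit Λ ξ m hm).2 = Λ.r η := by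
    rw [← hsr]
    conv_rhs => rw [← c1]
    exact (Λ.s_comp _ _ s1).symm
  refine pgSplit_unique Λ hm' _ _ ?_ d1 ?_
  · rw [Λ.r_comp _ _ hsnd]; exact s1
  · rw [← Λ.comp_assoc _ _ _ s1 hsnd, c1]

theorem InfPath.ext' {Λ : PGraphStr (Fin k → ℕ) V E} {x y : InfPath Λ}
    (h : x.seg = y.seg) : x = y := by
  cases x; cases y; cases h; rfl

theorem InfPath.seg_congr {Λ : PGraphStr (Fin k → ℕ) V E} (y : InfPath Λ)
    {m n m' n' : Fin k → ℕ} (hm : m = m') (hn : n = n') (h : m ≤ n) (h' : m' ≤ n') :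
    y.seg m n h = y.seg m' n' h' := by
  subst hm; subst hn; rfl

theorem shift_shift {Λ : PGraphStr (Fin k → ℕ) V E} (y : InfPath Λ)
    (u t : Fin k → ℕ) : (y.shift u).shift t = y.shift (t + u) := by
  apply InfPath.ext'
  funext m n h
  exact y.seg_congr (add_assoc m t u) (add_assoc n t u) _ _

variable (lam : E) (x : InfPath Λ)

/-- The path `λ · x(0, n)`. -/
def pgBig (n : Fin k → ℕ) : E := Λ.comp lam (x.seg 0 n zero_le)

theorem r_xseg (n : Fin k → ℕ) (h : (0 : Fin k → ℕ) ≤ n) :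
    Λ.r (x.seg 0 n h) = x.range := by
  have h0 := x.src 0 0 n le_rfl h
  rw [← h0, x.seg_self 0, Λ.s_vert]
  rfl

variable {lam x} (hs : Λ.s lam = x.range)

include hs

theorem s_lam_eq (n : Fin k → ℕ) (h : (0 : Fin k → ℕ) ≤ n) :
    Λ.s lam = Λ.r (x.seg 0 n h) := by rw [hs, r_xseg]

theorem d_pgBig (n : Fin k → ℕ) : Λ.d (pgBig Λ lam x n) = Λ.d lam + n := by
  rw [pgBig, Λ.d_comp _ _ (s_lam_eq Λ hs n zero_le), x.d_seg, tsub_zero]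

theorem pgBig_comp {m n : Fin k → ℕ} (h : m ≤ n) :
    pgBig Λ lam x n = Λ.comp (pgBig Λ lam x m) (x.seg m n h) := by
  rw [pgBig, pgBig, ← x.comp_seg 0 m n zero_le h]
  exact (Λ.comp_assoc _ _ _ (s_lam_eq Λ hs m zero_le) (x.src 0 m n zero_le h)).symm

theorem s_pgBig_r (m n N : Fin k → ℕ) (hm : m ≤ Λ.d (pgBig Λ lam x n)) (hN : n ≤ N) :
    Λ.s (pgSplit Λ (pgBig Λ lam x n) m hm).2 = Λ.r (x.seg n N hN) := by
  have h1 : Λ.s (pgBig Λ lam x n) = Λ.r (x.seg n N hN) := by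
    rw [pgBig, Λ.s_comp _ _ (s_lam_eq Λ hs n zero_le)]
    exact x.src 0 n N zero_le hN
  rw [← h1]
  conv_rhs => rw [← (pgSplit_spec Λ (pgBig Λ lam x n) m hm).2.2.2]
  rw [Λ.s_comp _ _ (pgSplit_spec Λ (pgBig Λ lam x n) m hm).1]

/-- The `(m,n)` segment of the extended path `λ · x`. -/
noncomputable def ySeg (m n : Fin k → ℕ) (h : m ≤ n) : E :=
  (pgSplit Λ
    (pgSplit Λ (pgBig Λ lam x n) m
      (by rw [d_pgBig Λ hs]; exact h.trans le_add_self)).2 (n - m)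
    (by
      rw [(pgSplit_spec Λ _ _ _).2.2.1, d_pgBig Λ hs]
      exact tsub_le_tsub_right le_add_self m)).1

theorem d_ySeg (m n : Fin k → ℕ) (h : m ≤ n) :
    Λ.d (ySeg Λ hs m n h) = n - m :=
  (pgSplit_spec Λ _ _ _).2.1

theorem ySeg_eq {m n : Fin k → ℕ} (h : m ≤ n) {N : Fin k → ℕ} (hN : n ≤ N)
    (α γ δ : E) (hα : Λ.d α = m) (hγ : Λ.d γ = n - m)
    (s1 : Λ.s α = Λ.r γ) (s2 : Λ.s γ = Λ.r δ)
    (hc : Λ.comp (Λ.comp α γ) δ = pgBig Λ lam x N) :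
    ySeg Λ hs m n h = γ := by
  have hm1 : m ≤ Λ.d (pgBig Λ lam x n) := by
    rw [d_pgBig Λ hs]; exact h.trans le_add_self
  have hm2 : m ≤ Λ.d (pgBig Λ lam x N) := by
    rw [d_pgBig Λ hs]; exact (h.trans hN).trans le_add_self
  have hnm : n - m ≤ Λ.d (pgSplit Λ (pgBig Λ lam x n) m hm1).2 := by
    rw [(pgSplit_spec Λ _ _ _).2.2.1, d_pgBig Λ hs]
    exact tsub_le_tsub_right le_add_self m
  have hsnd := s_pgBig_r Λ hs m n N hm1 hN
  have hbigN : pgBig Λ lam x N = Λ.comp (pgBig Λ lam x n) (x.seg n N hN) :=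
    pgBig_comp Λ hs hN
  have hm2' : m ≤ Λ.d (Λ.comp (pgBig Λ lam x n) (x.seg n N hN)) := by
    rw [← hbigN]; exact hm2
  have e0 : pgSplit Λ (pgBig Λ lam x N) m hm2 =
      ((pgSplit Λ (pgBig Λ lam x n) m hm1).1,
        Λ.comp (pgSplit Λ (pgBig Λ lam x n) m hm1).2 (x.seg n N hN)) := by
    rw [pgSplit_congr Λ hbigN m hm2 hm2']
    have hsb : Λ.s (pgBig Λ lam x n) = Λ.r (x.seg n N hN) := by
      rw [pgBig, Λ.s_comp _ _ (s_lam_eq Λ hs n zero_le)]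
      exact x.src 0 n N zero_le hN
    exact pgSplit_comp Λ _ _ hsb m hm1 hm2'
  have e1 : pgSplit Λ (pgBig Λ lam x N) m hm2 = (α, Λ.comp γ δ) := by
    refine pgSplit_unique Λ hm2 _ _ ?_ hα ?_
    · rw [Λ.r_comp _ _ s2]; exact s1
    · rw [← Λ.comp_assoc _ _ _ s1 s2]; exact hc
  have eF2 : Λ.comp (pgSplit Λ (pgBig Λ lam x n) m hm1).2 (x.seg n N hN) =
      Λ.comp γ δ := congrArg Prod.snd (e0.symm.trans e1)
  have hh : n - m ≤ Λ.d (Λ.comp (pgSplit Λ (pgBig Λ lam x n) m hm1).2 (x.seg n N hN)) := by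
    rw [Λ.d_comp _ _ hsnd]
    exact le_trans hnm le_self_add
  have hh' : n - m ≤ Λ.d (Λ.comp γ δ) := by rw [← eF2]; exact hh
  have e2 := pgSplit_comp Λ (pgSplit Λ (pgBig Λ lam x n) m hm1).2 (x.seg n N hN)
    hsnd (n - m) hnm hh
  have e3 : pgSplit Λ (Λ.comp γ δ) (n - m) hh' = (γ, δ) :=
    pgSplit_unique Λ hh' γ δ s2 hγ rfl
  have efin : (pgSplit Λ (pgSplit Λ (pgBig Λ lam x n) m hm1).2 (n - m) hnm).1 = γ :=
    congrArg Prod.fst (e2.symm.trans ((pgSplit_congr Λ eF2 (n - m) hh hh').trans e3))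
  exact efin

theorem ySeg_master {m n p : Fin k → ℕ} (h1 : m ≤ n) (h2 : n ≤ p) :
    Λ.s (ySeg Λ hs m n h1) = Λ.r (ySeg Λ hs n p h2) ∧
      Λ.comp (ySeg Λ hs m n h1) (ySeg Λ hs n p h2) = ySeg Λ hs m p (h1.trans h2) := by
  have hmP : m ≤ Λ.d (pgBig Λ lam x p) := by
    rw [d_pgBig Λ hs]; exact ((h1.trans h2).trans le_add_self)
  obtain ⟨sAB, dA, dB, cAB⟩ := pgSplit_spec Λ (pgBig Λ lam x p) m hmP
  set AB := pgSplit Λ (pgBig Λ lam x p) m hmP with hABdef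
  have hnm : n - m ≤ Λ.d AB.2 := by
    rw [dB, d_pgBig Λ hs]
    exact tsub_le_tsub_right (h2.trans le_add_self) m
  obtain ⟨sGD, dG, dD, cGD⟩ := pgSplit_spec Λ AB.2 (n - m) hnm
  set GD := pgSplit Λ AB.2 (n - m) hnm with hGDdef
  have hpn : p - n ≤ Λ.d GD.2 := by
    rw [dD, dB, d_pgBig Λ hs, tsub_tsub, add_tsub_cancel_of_le h1]
    exact tsub_le_tsub_right le_add_self n
  obtain ⟨sEZ, dE, dZ, cEZ⟩ := pgSplit_spec Λ GD.2 (p - n) hpn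
  set EZ := pgSplit Λ GD.2 (p - n) hpn with hEZdef
  have sA_rG : Λ.s AB.1 = Λ.r GD.1 := by rw [sAB, ← cGD, Λ.r_comp _ _ sGD]
  have sG_rE : Λ.s GD.1 = Λ.r EZ.1 := by rw [sGD, ← cEZ, Λ.r_comp _ _ sEZ]
  have hy1 : ySeg Λ hs m n h1 = GD.1 := by
    refine ySeg_eq Λ hs h1 h2 AB.1 GD.1 GD.2 dA dG sA_rG sGD ?_
    rw [Λ.comp_assoc _ _ _ sA_rG sGD, cGD, cAB]
  have dAG : Λ.d (Λ.comp AB.1 GD.1) = n := by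
    rw [Λ.d_comp _ _ sA_rG, dA, dG, add_tsub_cancel_of_le h1]
  have sAG : Λ.s (Λ.comp AB.1 GD.1) = Λ.r EZ.1 := by
    rw [Λ.s_comp _ _ sA_rG]; exact sG_rE
  have hcomp2 : Λ.comp (Λ.comp (Λ.comp AB.1 GD.1) EZ.1) EZ.2 = pgBig Λ lam x p := by
    rw [Λ.comp_assoc _ _ _ sAG sEZ, cEZ, Λ.comp_assoc _ _ _ sA_rG sGD, cGD, cAB]
  have hy2 : ySeg Λ hs n p h2 = EZ.1 :=
    ySeg_eq Λ hs h2 le_rfl (Λ.comp AB.1 GD.1) EZ.1 EZ.2 dAG dE sAG sEZ hcomp2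
  have dGE : Λ.d (Λ.comp GD.1 EZ.1) = p - m := by
    rw [Λ.d_comp _ _ sG_rE, dG, dE]
    funext i
    simp only [Pi.add_apply, Pi.sub_apply]
    have hi1 : m i ≤ n i := h1 i
    have hi2 : n i ≤ p i := h2 i
    omega
  have hy3 : ySeg Λ hs m p (h1.trans h2) = Λ.comp GD.1 EZ.1 := by
    refine ySeg_eq Λ hs (h1.trans h2) le_rfl AB.1 (Λ.comp GD.1 EZ.1) EZ.2 dA dGE ?_ ?_ ?_
    · rw [Λ.r_comp _ _ sG_rE]; exact sA_rG
    · rw [Λ.s_comp _ _ sG_rE]; exact sEZ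
    · rw [← Λ.comp_assoc _ _ _ sA_rG sG_rE]; exact hcomp2
  refine ⟨?_, ?_⟩
  · rw [hy1, hy2]; exact sG_rE
  · rw [hy1, hy2, hy3]

/-- The extended infinite path `λ · x`. -/
noncomputable def extendPath : InfPath Λ where
  seg := ySeg Λ hs
  d_seg := d_ySeg Λ hs
  src m n p h1 h2 := (ySeg_master Λ hs h1 h2).1
  seg_self m := pg_eq_vert Λ _ (by rw [d_ySeg, tsub_self])
  comp_seg m n p h1 h2 := (ySeg_master Λ hs h1 h2).2

theorem extendPath_shift : (extendPath Λ hs).shift (Λ.d lam) = x := by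
  apply InfPath.ext'
  funext m n h
  show ySeg Λ hs (m + Λ.d lam) (n + Λ.d lam) (add_le_add_left h (Λ.d lam)) = x.seg m n h
  refine ySeg_eq Λ hs (add_le_add_left h (Λ.d lam)) (le_refl (n + Λ.d lam))
    (Λ.comp lam (x.seg 0 m zero_le)) (x.seg m n h)
    (x.seg n (n + Λ.d lam) le_self_add) ?_ ?_ ?_ ?_ ?_
  · rw [Λ.d_comp _ _ (s_lam_eq Λ hs m zero_le), x.d_seg, tsub_zero, add_comm]
  · rw [x.d_seg]
    funext i
    simp only [Pi.add_apply, Pi.sub_apply]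
    omega
  · rw [Λ.s_comp _ _ (s_lam_eq Λ hs m zero_le)]
    exact x.src 0 m n zero_le h
  · exact x.src m n (n + Λ.d lam) h le_self_add
  · rw [Λ.comp_assoc _ _ _ (s_lam_eq Λ hs m zero_le) (x.src 0 m n zero_le h),
      x.comp_seg 0 m n zero_le h]
    exact (pgBig_comp Λ hs le_self_add).symm

theorem extendPath_range : (extendPath Λ hs).range = Λ.r lam := by
  have hvv : Λ.comp (Λ.vert (Λ.r (pgBig Λ lam x 0))) (Λ.vert (Λ.r (pgBig Λ lam x 0))) =
      Λ.vert (Λ.r (pgBig Λ lam x 0)) := by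
    have h := Λ.vert_comp (Λ.vert (Λ.r (pgBig Λ lam x 0)))
    rwa [Λ.r_vert] at h
  have h0 : ySeg Λ hs 0 0 le_rfl = Λ.vert (Λ.r (pgBig Λ lam x 0)) := by
    refine ySeg_eq Λ hs le_rfl le_rfl (Λ.vert (Λ.r (pgBig Λ lam x 0)))
      (Λ.vert (Λ.r (pgBig Λ lam x 0))) (pgBig Λ lam x 0) (Λ.d_vert _) ?_ ?_ ?_ ?_
    · rw [Λ.d_vert]; exact (tsub_self 0).symm
    · rw [Λ.s_vert, Λ.r_vert]
    · rw [Λ.s_vert]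
    · rw [hvv]; exact Λ.vert_comp (pgBig Λ lam x 0)
  show Λ.r (ySeg Λ hs 0 0 le_rfl) = Λ.r lam
  rw [h0, Λ.r_vert, pgBig, Λ.r_comp _ _ (s_lam_eq Λ hs 0 zero_le)]

end TranslationAux
/-- Translation lemma: if `Λ⁰` is a maximal tail, `p, q ∈ ℕ^k`, `n ∈ ℤ^k`, and
`p - n, q - n ∈ ℕ^k` with `(p - n, q - n) ∈ Σ_Λ`, then `(p, q) ∈ Σ_Λ`. -/
theorem stmt14 (k : ℕ) (V E : Type) [Countable E] (Λ : PGraphStr (Fin k → ℕ) V E)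
    (hrf : RowFiniteNoSources Λ) (hmt : IsMaximalTail Λ Set.univ)
    (p q p' q' : Fin k → ℕ) (n : Fin k → ℤ)
    (hp : ∀ i, (p' i : ℤ) = (p i : ℤ) - n i)
    (hq : ∀ i, (q' i : ℤ) = (q i : ℤ) - n i)
    (h : (p', q') ∈ SigmaL Λ) :
    (p, q) ∈ SigmaL Λ := by
  rw [SigmaL, Set.mem_iUnion] at h
  obtain ⟨v, hv⟩ := h
  obtain ⟨lam, hrl, hdl⟩ := (hrf v (fun i => (-n i).toNat)).2
  have hpc : p + Λ.d lam = (fun i => (n i).toNat) + p' := by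
    funext i
    have hpi := hp i
    simp only [Pi.add_apply, hdl]
    omega
  have hqc : q + Λ.d lam = (fun i => (n i).toNat) + q' := by
    funext i
    have hqi := hq i
    simp only [Pi.add_apply, hdl]
    omega
  rw [SigmaL, Set.mem_iUnion]
  refine ⟨Λ.s lam, fun x hx => ?_⟩
  have hs : Λ.s lam = x.range := hx.symm
  have h0 : (extendPath Λ hs).shift p' = (extendPath Λ hs).shift q' :=
    hv (extendPath Λ hs) (by rw [extendPath_range, hrl])
  calc x.shift p = ((extendPath Λ hs).shift (Λ.d lam)).shift p := by
        rw [extendPath_shift]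
    _ = (extendPath Λ hs).shift (p + Λ.d lam) := shift_shift _ _ _
    _ = ((extendPath Λ hs).shift p').shift (fun i => (n i).toNat) := by
        rw [hpc]; exact (shift_shift _ _ _).symm
    _ = ((extendPath Λ hs).shift q').shift (fun i => (n i).toNat) := by rw [h0]
    _ = (extendPath Λ hs).shift (q + Λ.d lam) := by
        rw [hqc]; exact shift_shift _ _ _
    _ = ((extendPath Λ hs).shift (Λ.d lam)).shift q := (shift_shift _ _ _).symm
    _ = x.shift q := by rw [extendPath_shift]
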